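/- arXiv:1803.00180 — 2 statements merged into one kernel-verified Lean document; each statement's English description precedes it below -/
import Mathlib

section
/- In an elementary topos, the singleton map {·}_a : a → Ω^a, defined as the exponential transpose of the classifying map δ_a of the diagonal Δ_a = ⟨id_a, id_a⟩ : a → a × a, is a monomorphism. -/
/-!
Curried maps agree exactly when their uncurried whiskerings `a ◁ f ≫ δ` and `a ◁ g ≫ δ` agree.
Precomposing with `⟨f, 𝟙⟩` turns these into `⟨f, g⟩ ≫ δ` and `⟨f, f⟩ ≫ δ`; the latter factors
through `t` because `⟨f, f⟩` factors through the diagonal, so `⟨f, g⟩` factors through the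
diagonal `δ` classifies, which forces `f = g`.
-/

open CategoryTheory CategoryTheory.Limits CategoryTheory.MonoidalCategory CategoryTheory.CartesianMonoidalCategory

namespace CategoryTheory.CartesianMonoidalCategory

variable {C : Type*} [Category C] [CartesianMonoidalCategory C] {Ω a x : C} {t : 𝟙_ C ⟶ Ω}
  {δ : a ⊗ a ⟶ Ω}

lemma eq_of_lift_comp_of_isPullback_diag (hδ : IsPullback (toUnit a) (lift (𝟙 a) (𝟙 a)) t δ)
    {f g : x ⟶ a} (h : lift f g ≫ δ = toUnit x ≫ t) : f = g := by
  have hu : hδ.lift (toUnit x) (lift f g) h.symm ≫ lift (𝟙 a) (𝟙 a) = lift f g :=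
    hδ.lift_snd _ _ _
  have hf := congrArg (· ≫ fst a a) hu
  have hg := congrArg (· ≫ snd a a) hu
  simp only [Category.assoc, lift_fst, lift_snd, Category.comp_id] at hf hg
  rw [← hf, hg]

lemma lift_self_comp_of_isPullback_diag (hδ : IsPullback (toUnit a) (lift (𝟙 a) (𝟙 a)) t δ)
    (f : x ⟶ a) : lift f f ≫ δ = toUnit x ≫ t := by
  rw [← Category.comp_id f, ← comp_lift, Category.assoc, ← hδ.w, ← Category.assoc,
    toUnit_unique (f ≫ toUnit a) (toUnit x)]

lemma eq_of_whiskerLeft_comp_of_isPullback_diag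
    (hδ : IsPullback (toUnit a) (lift (𝟙 a) (𝟙 a)) t δ) {f g : x ⟶ a}
    (h : a ◁ f ≫ δ = a ◁ g ≫ δ) : f = g := by
  refine eq_of_lift_comp_of_isPullback_diag hδ ?_
  calc lift f g ≫ δ = lift f (𝟙 x) ≫ a ◁ g ≫ δ := by rw [lift_whiskerLeft_assoc, Category.id_comp]
    _ = lift f (𝟙 x) ≫ a ◁ f ≫ δ := by rw [h]
    _ = lift f f ≫ δ := by rw [lift_whiskerLeft_assoc, Category.id_comp]
    _ = toUnit x ≫ t := lift_self_comp_of_isPullback_diag hδ f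

end CategoryTheory.CartesianMonoidalCategory

theorem stmt_15_general {E : Type*} [Category E] [CartesianMonoidalCategory E]
    [MonoidalClosed E]
    (Ω : E) (t : 𝟙_ E ⟶ Ω)
    (a : E) (δ : a ⊗ a ⟶ Ω)
    (hδ : IsPullback (toUnit a) (lift (𝟙 a) (𝟙 a)) t δ) :
    Mono (MonoidalClosed.curry δ) := by
  refine ⟨fun f g h => eq_of_whiskerLeft_comp_of_isPullback_diag hδ ?_⟩
  apply MonoidalClosed.curry_injective
  rw [MonoidalClosed.curry_natural_left, MonoidalClosed.curry_natural_left, h]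

/-- In an elementary topos, the singleton map `{·}_a : a ⟶ Ω^a`, the exponential
transpose of the classifying map of the diagonal, is a monomorphism. -/
theorem stmt_15 {E : Type*} [Category E] [HasFiniteLimits E] [CartesianMonoidalCategory E]
    [MonoidalClosed E] [HasFiniteColimits E]
    (Ω : E) (t : 𝟙_ E ⟶ Ω)
    (classify : ∀ {x y : E} (m : x ⟶ y), Mono m →
      ∃! χ : y ⟶ Ω, IsPullback (toUnit x) m t χ)
    (a : E) (δ : a ⊗ a ⟶ Ω)
    (hδ : IsPullback (toUnit a) (lift (𝟙 a) (𝟙 a)) t δ) :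
    Mono (MonoidalClosed.curry δ) :=
  stmt_15_general Ω t a δ hδ
end

section
/- For any object b of an elementary topos E, the slice category E/b is cartesian closed; consequently E/b is itself an elementary topos, with terminal object id_b, subobject classifier given by the projection Ω × b → b with classifying point ⟨δ_b ∘ Δ_b, id_b⟩ : b → Ω × b over b. -/
/-!
A topos has partial map classifiers. The subobject `C̃` of `C ⟹ Ω` of subsingletons, an equalizer
comparing `c ∈ s ∧ c' ∈ s` with `c ∈ s ∧ c' ∈ s ∧ c = c'`, together with the singleton map
`C ⟶ C̃`, classifies partial maps `X ⇀ C`, whose graphs are single valued.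

With partial map classifiers, slices of a cartesian closed category are cartesian closed. For `A`
and `Y` over `b`, a map `A ×_b X ⟶ Y` over `b` is a partial map `A × X ⇀ Y` with domain
`A ×_b X ↪ A × X` lying over `b`, that is a map `A × X ⟶ Ỹ` whose composite with `Ỹ ⟶ b̃` is
`A × X ⟶ A × b ⟶ b̃`, the last arrow classifying the graph of `A ⟶ b`. Transposing, these are the
maps `X ⟶ Y^A` over `b`, where `Y^A` is the pullback of `(A ⟹ Ỹ) ⟶ (A ⟹ b̃)` along the transpose
`b ⟶ (A ⟹ b̃)` of that arrow.

A subobject of `B` in `E/b` is a subobject of `B` in `E`, so `Ω × b ⟶ b` with the point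
`⟨true, 𝟙⟩` classifies subobjects in `E/b`; and `δ_b ∘ Δ_b = true`.
-/

open CategoryTheory CategoryTheory.Limits CategoryTheory.MonoidalCategory CategoryTheory.CartesianMonoidalCategory

noncomputable section

namespace CategoryTheory

open MonoidalClosed CartesianClosed

universe v u

variable {E : Type u} [Category.{v} E]

lemma IsPullback.of_forall_existsUnique {P X Y Z : E} {fst : P ⟶ X} {snd : P ⟶ Y}
    {f : X ⟶ Z} {g : Y ⟶ Z} (w : fst ≫ f = snd ≫ g)
    (h : ∀ {W : E} (a : W ⟶ X) (b : W ⟶ Y), a ≫ f = b ≫ g →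
      ∃! l : W ⟶ P, l ≫ fst = a ∧ l ≫ snd = b) :
    IsPullback fst snd f g :=
  IsPullback.of_isLimit' ⟨w⟩ <| PullbackCone.IsLimit.mk w
    (fun s => (h s.fst s.snd s.condition).choose)
    (fun s => (h s.fst s.snd s.condition).choose_spec.1.1)
    (fun s => (h s.fst s.snd s.condition).choose_spec.1.2)
    (fun s _ h₁ h₂ => (h s.fst s.snd s.condition).unique ⟨h₁, h₂⟩
      (h s.fst s.snd s.condition).choose_spec.1)

structure PartialMapClassifier (C : E) where
  obj : E
  η : C ⟶ obj
  mono_η : Mono η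
  classify {D X : E} (d : D ⟶ X) [Mono d] (v : D ⟶ C) : X ⟶ obj
  isPullback {D X : E} (d : D ⟶ X) [Mono d] (v : D ⟶ C) : IsPullback v d η (classify d v)
  uniq {D X : E} {d : D ⟶ X} [Mono d] {v : D ⟶ C} {φ : X ⟶ obj} (h : IsPullback v d η φ) :
    φ = classify d v

attribute [instance] PartialMapClassifier.mono_η

namespace PartialMapClassifier

variable {C B : E} (P : PartialMapClassifier C) (Q : PartialMapClassifier B)

lemma comp_classify {D X D' X' : E} {d : D ⟶ X} [Mono d] {v : D ⟶ C} {f : X' ⟶ X}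
    {d' : D' ⟶ X'} [Mono d'] {u : D' ⟶ D} (h : IsPullback u d' d f) :
    f ≫ P.classify d v = P.classify d' (u ≫ v) :=
  P.uniq (h.paste_horiz (P.isPullback d v))

def map (γ : C ⟶ B) : P.obj ⟶ Q.obj := Q.classify P.η γ

lemma isPullback_map (γ : C ⟶ B) : IsPullback γ P.η Q.η (P.map Q γ) := Q.isPullback P.η γ

lemma classify_comp_map {D X : E} (d : D ⟶ X) [Mono d] (v : D ⟶ C) (γ : C ⟶ B) :
    P.classify d v ≫ P.map Q γ = Q.classify d (v ≫ γ) :=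
  Q.uniq ((P.isPullback d v).paste_horiz (P.isPullback_map Q γ))

end PartialMapClassifier

namespace Subobject.Classifier

variable (𝒞 : Classifier E)

def Holds {Z : E} (p : Z ⟶ 𝒞.Ω) : Prop := p = 𝒞.χ₀ Z ≫ 𝒞.truth

variable {𝒞}

lemma comp_χ₀ {Z' Z : E} (z : Z' ⟶ Z) : z ≫ 𝒞.χ₀ Z = 𝒞.χ₀ Z' := Subsingleton.elim _ _

lemma Holds.comp {Z' Z : E} {p : Z ⟶ 𝒞.Ω} (h : 𝒞.Holds p) (z : Z' ⟶ Z) : 𝒞.Holds (z ≫ p) := by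
  rw [Holds, h, ← Category.assoc, comp_χ₀]

lemma holds_comp_iff_of_isPullback {U X : E} {m : U ⟶ X} {χ : X ⟶ 𝒞.Ω}
    (h : IsPullback m (𝒞.χ₀ U) χ 𝒞.truth) {Z : E} (v : Z ⟶ X) :
    𝒞.Holds (v ≫ χ) ↔ ∃ w : Z ⟶ U, w ≫ m = v := by
  refine ⟨fun hv => ⟨h.lift v (𝒞.χ₀ Z) hv, h.lift_fst _ _ _⟩, ?_⟩
  rintro ⟨w, rfl⟩
  rw [Holds, Category.assoc, h.w, ← Category.assoc, comp_χ₀]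

lemma holds_comp_χ_iff {U X : E} (m : U ⟶ X) [Mono m] {Z : E} (v : Z ⟶ X) :
    𝒞.Holds (v ≫ 𝒞.χ m) ↔ ∃ w : Z ⟶ U, w ≫ m = v :=
  holds_comp_iff_of_isPullback (𝒞.isPullback m) v

lemma hom_ext_of_holds [HasPullbacks E] {X : E} {χ χ' : X ⟶ 𝒞.Ω}
    (h : ∀ {Z : E} (v : Z ⟶ X), 𝒞.Holds (v ≫ χ) ↔ 𝒞.Holds (v ≫ χ')) : χ = χ' := by
  have hχ : IsPullback (pullback.fst χ 𝒞.truth) (𝒞.χ₀ _) χ 𝒞.truth := by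
    simpa only [Subsingleton.elim (pullback.snd χ 𝒞.truth) (𝒞.χ₀ _)] using
      IsPullback.of_hasPullback χ 𝒞.truth
  have hχ' : IsPullback (pullback.fst χ 𝒞.truth) (𝒞.χ₀ _) χ' 𝒞.truth := by
    refine .of_forall_existsUnique ((h _).1 ?_) fun a c hac => ?_
    · exact (holds_comp_iff_of_isPullback hχ _).2 ⟨𝟙 _, Category.id_comp _⟩
    · obtain ⟨l, hl⟩ := (holds_comp_iff_of_isPullback hχ a).1
        ((h a).2 (by rw [Holds, hac, Subsingleton.elim c]))
      exact ⟨l, ⟨hl, Subsingleton.elim _ _⟩, fun l' hl' =>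
        (cancel_mono (pullback.fst χ 𝒞.truth)).1 (hl'.1.trans hl.symm)⟩
  exact (𝒞.uniq _ hχ).trans (𝒞.uniq _ hχ').symm

variable [CartesianMonoidalCategory E]

def mkOfTensorUnit {Ω : E} (t : 𝟙_ E ⟶ Ω)
    (h : ∀ {U X : E} (m : U ⟶ X), Mono m → ∃! χ : X ⟶ Ω, IsPullback (toUnit U) m t χ) :
    Classifier E :=
  mkOfTerminalΩ₀ (𝟙_ E) isTerminalTensorUnit Ω t (fun m hm => (h m hm).choose)
    (fun m hm => (h m hm).choose_spec.1.flip)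
    (fun m hm _ hχ => (h m hm).unique hχ.flip (h m hm).choose_spec.1)

lemma holds_lift_comp_χ_lift_iff {D X C Z : E} (d : D ⟶ X) (v : D ⟶ C) [Mono (lift v d)]
    (c : Z ⟶ C) (x : Z ⟶ X) :
    𝒞.Holds (lift c x ≫ 𝒞.χ (lift v d)) ↔ ∃ w : Z ⟶ D, w ≫ v = c ∧ w ≫ d = x := by
  rw [holds_comp_χ_iff]
  refine exists_congr fun w => ⟨fun h => ⟨?_, ?_⟩, fun ⟨hv, hd⟩ => by rw [comp_lift, hv, hd]⟩
  · simpa using congrArg (· ≫ fst _ _) h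
  · simpa using congrArg (· ≫ snd _ _) h

variable (𝒞) in
def eqPred (C : E) : C ⊗ C ⟶ 𝒞.Ω := 𝒞.χ (lift (𝟙 C) (𝟙 C))

lemma holds_lift_comp_eqPred {C Z : E} (u v : Z ⟶ C) :
    𝒞.Holds (lift u v ≫ 𝒞.eqPred C) ↔ u = v := by
  simp only [eqPred, holds_lift_comp_χ_lift_iff, Category.comp_id, exists_eq_left]

variable (𝒞) in
def andPred : 𝒞.Ω ⊗ 𝒞.Ω ⟶ 𝒞.Ω := 𝒞.χ (lift 𝒞.truth 𝒞.truth)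

lemma holds_lift_comp_andPred {Z : E} (p q : Z ⟶ 𝒞.Ω) :
    𝒞.Holds (lift p q ≫ 𝒞.andPred) ↔ 𝒞.Holds p ∧ 𝒞.Holds q := by
  rw [andPred, holds_lift_comp_χ_lift_iff]
  refine ⟨fun ⟨w, hp, hq⟩ => ?_, fun ⟨hp, hq⟩ => ⟨𝒞.χ₀ Z, hp.symm, hq.symm⟩⟩
  rw [Holds, Holds, ← hp, ← hq, Subsingleton.elim w]
  exact ⟨rfl, rfl⟩

section PartialMaps

variable [MonoidalClosed E]

variable (𝒞) in
def Mem {Z C : E} (c : Z ⟶ C) (σ : Z ⟶ C ⟹ 𝒞.Ω) : Prop :=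
  𝒞.Holds (lift c σ ≫ (ihom.ev C).app 𝒞.Ω)

lemma Mem.comp {Z' Z C : E} {c : Z ⟶ C} {σ : Z ⟶ C ⟹ 𝒞.Ω} (h : 𝒞.Mem c σ) (z : Z' ⟶ Z) :
    𝒞.Mem (z ≫ c) (z ≫ σ) := by
  simpa only [Mem, ← comp_lift_assoc] using Holds.comp h z

lemma mem_comp_curry_iff {Z X C : E} (c : Z ⟶ C) (x : Z ⟶ X) (f : C ⊗ X ⟶ 𝒞.Ω) :
    𝒞.Mem c (x ≫ curry f) ↔ 𝒞.Holds (lift c x ≫ f) := by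
  rw [Mem, ← lift_whiskerLeft_assoc, whiskerLeft_curry_ihom_ev_app]

lemma hom_ext_of_mem [HasPullbacks E] {X C : E} {σ σ' : X ⟶ C ⟹ 𝒞.Ω}
    (h : ∀ {Z : E} (x : Z ⟶ X) (c : Z ⟶ C), 𝒞.Mem c (x ≫ σ) ↔ 𝒞.Mem c (x ≫ σ')) : σ = σ' := by
  have comp_uncurry : ∀ {Z : E} (v : Z ⟶ C ⊗ X) (τ : X ⟶ C ⟹ 𝒞.Ω),
      v ≫ uncurry τ = lift (v ≫ fst _ _) (v ≫ snd _ _ ≫ τ) ≫ (ihom.ev C).app 𝒞.Ω := by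
    intro Z v τ
    rw [uncurry_eq, ← Category.assoc]
    congr 1
    ext <;> simp
  refine uncurry_injective (hom_ext_of_holds fun v => ?_)
  rw [comp_uncurry, comp_uncurry]
  simpa only [Mem, Category.assoc] using h (v ≫ snd _ _) (v ≫ fst _ _)

lemma mem_comp_curry_χ_lift_iff {D X C Z : E} (d : D ⟶ X) (v : D ⟶ C) [Mono (lift v d)]
    (c : Z ⟶ C) (x : Z ⟶ X) :
    𝒞.Mem c (x ≫ curry (𝒞.χ (lift v d))) ↔ ∃ w : Z ⟶ D, w ≫ v = c ∧ w ≫ d = x := by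
  rw [mem_comp_curry_iff, holds_lift_comp_χ_lift_iff]

variable (𝒞) in
def IsSingleValued {X C : E} (σ : X ⟶ C ⟹ 𝒞.Ω) : Prop :=
  ∀ {Z : E} (x : Z ⟶ X) (c c' : Z ⟶ C), 𝒞.Mem c (x ≫ σ) → 𝒞.Mem c' (x ≫ σ) → c = c'

lemma isSingleValued_curry_χ_lift {D X C : E} (d : D ⟶ X) [Mono d] (v : D ⟶ C) :
    𝒞.IsSingleValued (curry (𝒞.χ (lift v d))) := by
  intro Z x c c' hc hc'
  rw [mem_comp_curry_χ_lift_iff] at hc hc'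
  obtain ⟨w, rfl, hw⟩ := hc
  obtain ⟨w', rfl, hw'⟩ := hc'
  rw [(cancel_mono d).1 (hw.trans hw'.symm)]

variable (𝒞) in
def pairPred (C : E) : (C ⊗ C) ⊗ (C ⟹ 𝒞.Ω) ⟶ 𝒞.Ω :=
  lift (lift (fst _ _ ≫ fst _ _) (snd _ _) ≫ (ihom.ev C).app 𝒞.Ω)
    (lift (fst _ _ ≫ snd _ _) (snd _ _) ≫ (ihom.ev C).app 𝒞.Ω) ≫ 𝒞.andPred

variable (𝒞) in
def pairEqPred (C : E) : (C ⊗ C) ⊗ (C ⟹ 𝒞.Ω) ⟶ 𝒞.Ω :=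
  lift (𝒞.pairPred C) (fst _ _ ≫ 𝒞.eqPred C) ≫ 𝒞.andPred

lemma holds_lift_comp_pairPred {Z C : E} (c c' : Z ⟶ C) (σ : Z ⟶ C ⟹ 𝒞.Ω) :
    𝒞.Holds (lift (lift c c') σ ≫ 𝒞.pairPred C) ↔ 𝒞.Mem c σ ∧ 𝒞.Mem c' σ := by
  rw [pairPred, ← Category.assoc, comp_lift, holds_lift_comp_andPred]
  simp only [← Category.assoc, comp_lift, lift_fst, lift_snd]
  rfl

lemma holds_lift_comp_pairEqPred {Z C : E} (c c' : Z ⟶ C) (σ : Z ⟶ C ⟹ 𝒞.Ω) :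
    𝒞.Holds (lift (lift c c') σ ≫ 𝒞.pairEqPred C) ↔ (𝒞.Mem c σ ∧ 𝒞.Mem c' σ) ∧ c = c' := by
  rw [pairEqPred, ← Category.assoc, comp_lift, holds_lift_comp_andPred,
    holds_lift_comp_pairPred, lift_fst_assoc, holds_lift_comp_eqPred]

variable [HasPullbacks E]

lemma comp_curry_pairPred_eq_iff {X C : E} (σ : X ⟶ C ⟹ 𝒞.Ω) :
    σ ≫ curry (𝒞.pairPred C) = σ ≫ curry (𝒞.pairEqPred C) ↔ 𝒞.IsSingleValued σ := by
  have mem_iff : ∀ {Z : E} (x : Z ⟶ X) (c c' : Z ⟶ C),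
      (𝒞.Mem (lift c c') (x ≫ σ ≫ curry (𝒞.pairPred C)) ↔ 𝒞.Mem c (x ≫ σ) ∧ 𝒞.Mem c' (x ≫ σ)) ∧
      (𝒞.Mem (lift c c') (x ≫ σ ≫ curry (𝒞.pairEqPred C)) ↔
        (𝒞.Mem c (x ≫ σ) ∧ 𝒞.Mem c' (x ≫ σ)) ∧ c = c') := by
    intro Z x c c'
    simp only [← Category.assoc _ σ, mem_comp_curry_iff, holds_lift_comp_pairPred,
      holds_lift_comp_pairEqPred, and_self]
  constructor
  · intro h Z x c c' hc hc'
    have hcc' := (mem_iff x c c').1.2 ⟨hc, hc'⟩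
    rw [h] at hcc'
    exact ((mem_iff x c c').2.1 hcc').2
  · intro h
    refine hom_ext_of_mem fun x cc => ?_
    have hcc : cc = lift (cc ≫ fst _ _) (cc ≫ snd _ _) := by ext <;> simp
    rw [hcc, (mem_iff _ _ _).1, (mem_iff _ _ _).2]
    exact ⟨fun hm => ⟨hm, h _ _ _ hm.1 hm.2⟩, And.left⟩

variable [HasEqualizers E]

variable (𝒞) in
abbrev subsingletons (C : E) : E := equalizer (curry (𝒞.pairPred C)) (curry (𝒞.pairEqPred C))

variable (𝒞) in
abbrev subsingletonsι (C : E) : 𝒞.subsingletons C ⟶ C ⟹ 𝒞.Ω := equalizer.ι _ _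

lemma isSingleValued_comp_subsingletonsι {X C : E} (ξ : X ⟶ 𝒞.subsingletons C) :
    𝒞.IsSingleValued (ξ ≫ 𝒞.subsingletonsι C) := by
  rw [← comp_curry_pairPred_eq_iff, Category.assoc, Category.assoc, subsingletonsι,
    equalizer.condition]

variable (𝒞) in
def classifyPartial {D X C : E} (d : D ⟶ X) [Mono d] (v : D ⟶ C) : X ⟶ 𝒞.subsingletons C :=
  equalizer.lift _ ((comp_curry_pairPred_eq_iff _).2 (isSingleValued_curry_χ_lift d v))

variable (𝒞) in
def singleton (C : E) : C ⟶ 𝒞.subsingletons C := 𝒞.classifyPartial (𝟙 C) (𝟙 C)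

lemma mem_comp_classifyPartial_ι_iff {D X C Z : E} (d : D ⟶ X) [Mono d] (v : D ⟶ C)
    (c : Z ⟶ C) (x : Z ⟶ X) :
    𝒞.Mem c (x ≫ 𝒞.classifyPartial d v ≫ 𝒞.subsingletonsι C) ↔
      ∃ w : Z ⟶ D, w ≫ v = c ∧ w ≫ d = x := by
  rw [classifyPartial, subsingletonsι, equalizer.lift_ι, mem_comp_curry_χ_lift_iff]

lemma mem_comp_singleton_ι_iff {C Z : E} (c u : Z ⟶ C) :
    𝒞.Mem c (u ≫ 𝒞.singleton C ≫ 𝒞.subsingletonsι C) ↔ c = u := by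
  simp only [singleton, mem_comp_classifyPartial_ι_iff, Category.comp_id, exists_eq_left]

instance {C : E} : Mono (𝒞.singleton C) := by
  refine ⟨fun u u' h => ?_⟩
  have hu := (mem_comp_singleton_ι_iff (𝒞 := 𝒞) u u).2 rfl
  rwa [← Category.assoc, h, Category.assoc, mem_comp_singleton_ι_iff] at hu

lemma mem_comp_subsingletonsι_iff {Z X C : E} (ξ : X ⟶ 𝒞.subsingletons C) (c : Z ⟶ C)
    (x : Z ⟶ X) : 𝒞.Mem c (x ≫ ξ ≫ 𝒞.subsingletonsι C) ↔ c ≫ 𝒞.singleton C = x ≫ ξ := by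
  refine ⟨fun hc => ?_, fun h => ?_⟩
  · rw [← cancel_mono (𝒞.subsingletonsι C), Category.assoc, Category.assoc]
    refine (hom_ext_of_mem fun z c' => ?_).symm
    rw [← Category.assoc z c, mem_comp_singleton_ι_iff]
    have hzc : 𝒞.Mem (z ≫ c) ((z ≫ x) ≫ ξ ≫ 𝒞.subsingletonsι C) := by
      simpa only [Category.assoc] using hc.comp z
    rw [← Category.assoc z x]
    exact ⟨fun hc' => isSingleValued_comp_subsingletonsι ξ _ _ _ hc' hzc, fun h => h ▸ hzc⟩
  · rw [← Category.assoc, ← h, Category.assoc, mem_comp_singleton_ι_iff]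

lemma singleton_eq_comp_classifyPartial_iff {D X C Z : E} (d : D ⟶ X) [Mono d] (v : D ⟶ C)
    (c : Z ⟶ C) (x : Z ⟶ X) :
    c ≫ 𝒞.singleton C = x ≫ 𝒞.classifyPartial d v ↔ ∃ w : Z ⟶ D, w ≫ v = c ∧ w ≫ d = x := by
  rw [← mem_comp_subsingletonsι_iff, mem_comp_classifyPartial_ι_iff]

lemma isPullback_classifyPartial {D X C : E} (d : D ⟶ X) [Mono d] (v : D ⟶ C) :
    IsPullback v d (𝒞.singleton C) (𝒞.classifyPartial d v) := by
  refine .of_forall_existsUnique ((singleton_eq_comp_classifyPartial_iff d v v d).2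
    ⟨𝟙 D, Category.id_comp v, Category.id_comp d⟩) fun c x h => ?_
  obtain ⟨w, hw⟩ := (singleton_eq_comp_classifyPartial_iff d v c x).1 h
  exact ⟨w, hw, fun w' hw' => (cancel_mono d).1 (hw'.2.trans hw.2.symm)⟩

lemma eq_classifyPartial_of_isPullback {D X C : E} {d : D ⟶ X} [Mono d] {v : D ⟶ C}
    {φ : X ⟶ 𝒞.subsingletons C} (h : IsPullback v d (𝒞.singleton C) φ) :
    φ = 𝒞.classifyPartial d v := by
  rw [← cancel_mono (𝒞.subsingletonsι C)]
  refine hom_ext_of_mem fun x c => ?_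
  rw [mem_comp_subsingletonsι_iff, mem_comp_classifyPartial_ι_iff]
  refine ⟨fun hc => ⟨h.lift c x hc, h.lift_fst _ _ _, h.lift_snd _ _ _⟩, ?_⟩
  rintro ⟨w, rfl, rfl⟩
  rw [Category.assoc, Category.assoc, h.w]

variable (𝒞) in
def partialMapClassifier (C : E) : PartialMapClassifier C where
  obj := 𝒞.subsingletons C
  η := 𝒞.singleton C
  mono_η := inferInstance
  classify d _ v := 𝒞.classifyPartial d v
  isPullback d _ v := isPullback_classifyPartial d v
  uniq h := eq_classifyPartial_of_isPullback h

end PartialMaps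

lemma isPullback_lift_truth_fst (b : E) :
    IsPullback (lift (𝒞.χ₀ b ≫ 𝒞.truth) (𝟙 b)) (𝒞.χ₀ b) (fst 𝒞.Ω b) 𝒞.truth := by
  refine .of_forall_existsUnique (lift_fst _ _) fun a c h =>
    ⟨a ≫ snd _ _, ⟨?_, Subsingleton.elim _ _⟩, ?_⟩
  · ext
    · rw [Category.assoc, lift_fst, ← Category.assoc, comp_χ₀, h, Subsingleton.elim c]
    · simp
  · rintro l ⟨rfl, -⟩
    simp

lemma isPullback_lift_lift_truth_iff {U X b : E} (m : U ⟶ X) (χ : X ⟶ 𝒞.Ω) (g : X ⟶ b) :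
    IsPullback m (m ≫ g) (lift χ g) (lift (𝒞.χ₀ b ≫ 𝒞.truth) (𝟙 b)) ↔
      IsPullback m (𝒞.χ₀ U) χ 𝒞.truth := by
  have outer : ∀ {χ₀ : U ⟶ 𝒞.Ω₀},
      IsPullback m χ₀ (lift χ g ≫ fst _ _) 𝒞.truth ↔ IsPullback m (𝒞.χ₀ U) χ 𝒞.truth := by
    intro χ₀
    rw [lift_fst, Subsingleton.elim χ₀]
  refine ⟨fun h => outer.1 (h.paste_vert (isPullback_lift_truth_fst b)), fun h => ?_⟩
  refine (outer.2 h).of_bot ?_ (isPullback_lift_truth_fst b)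
  ext
  · simp [h.w, ← Category.assoc, comp_χ₀]
  · simp

end Subobject.Classifier

lemma isPullback_pullbackFst_graph [CartesianMonoidalCategory E] [HasPullbacks E] {A X b : E}
    (f : A ⟶ b) (g : X ⟶ b) :
    IsPullback (pullback.fst f g) (lift (pullback.fst f g) (pullback.snd f g))
      (lift (𝟙 A) f) (A ◁ g) := by
  refine .of_forall_existsUnique (by simp [pullback.condition]) fun a e h => ?_
  have ha : a = e ≫ fst _ _ := by simpa using congrArg (· ≫ fst _ _) h
  have hag : a ≫ f = (e ≫ snd _ _) ≫ g := by simpa using congrArg (· ≫ snd _ _) h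
  refine ⟨pullback.lift a (e ≫ snd _ _) hag, ⟨pullback.lift_fst _ _ _, ?_⟩, ?_⟩
  · ext <;> simp [ha, pullback.lift_fst, pullback.lift_snd]
  · rintro l ⟨hl₁, hl₂⟩
    apply pullback.hom_ext
    · rw [hl₁, pullback.lift_fst]
    · simpa [pullback.lift_snd] using congrArg (· ≫ snd _ _) hl₂

namespace Over

attribute [local instance] Over.cartesianMonoidalCategory

section Exponentials

variable [CartesianMonoidalCategory E] [HasPullbacks E] {b : E}

abbrev toTensor (A X : Over b) : (A ⊗ X).left ⟶ A.left ⊗ X.left :=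
  lift (pullback.fst A.hom X.hom) (pullback.snd A.hom X.hom)

lemma isPullback_toTensor (A X : Over b) :
    IsPullback (pullback.fst A.hom X.hom) (toTensor A X) (lift (𝟙 A.left) A.hom)
      (A.left ◁ X.hom) :=
  isPullback_pullbackFst_graph A.hom X.hom

instance (A X : Over b) : Mono (toTensor A X) := (isPullback_toTensor A X).mono_snd_of_mono

lemma isPullback_whiskerLeft_left_toTensor (A : Over b) {X' X : Over b} (ρ : X' ⟶ X) :
    IsPullback (A ◁ ρ).left (toTensor A X') (toTensor A X) (A.left ◁ ρ.left) := by
  refine IsPullback.of_right ?_ (by ext <;> simp) (isPullback_toTensor A X)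
  rw [whiskerLeft_left_fst, ← whiskerLeft_comp, Over.w ρ]
  exact isPullback_toTensor A X'

variable (P : ∀ C : E, PartialMapClassifier C)

def classifyGraph (A : Over b) : A.left ⊗ b ⟶ (P b).obj :=
  (P b).classify (lift (𝟙 A.left) A.hom) A.hom

lemma isPullback_toTensor_classifyGraph (A X : Over b) :
    IsPullback (A ⊗ X).hom (toTensor A X) (P b).η ((A.left ◁ X.hom) ≫ classifyGraph P A) :=
  (isPullback_toTensor A X).paste_horiz ((P b).isPullback _ _)

variable [MonoidalClosed E]

abbrev CompatiblePartialMap (A X Y : Over b) : Type v :=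
  { φ : A.left ⊗ X.left ⟶ (P Y.left).obj //
    φ ≫ (P Y.left).map (P b) Y.hom = (A.left ◁ X.hom) ≫ classifyGraph P A }

abbrev exp (A Y : Over b) : Over b :=
  Over.mk (pullback.snd ((ihom A.left).map ((P Y.left).map (P b) Y.hom))
    (curry (classifyGraph P A)))

def homEquivCompatiblePartialMap (A X Y : Over b) :
    (A ⊗ X ⟶ Y) ≃ CompatiblePartialMap P A X Y where
  toFun κ := ⟨(P Y.left).classify (toTensor A X) κ.left, by
    rw [PartialMapClassifier.classify_comp_map, Over.w κ]
    exact ((P b).uniq (isPullback_toTensor_classifyGraph P A X)).symm⟩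
  invFun φ := Over.homMk (((P Y.left).isPullback_map (P b) Y.hom).lift (A ⊗ X).hom
      (toTensor A X ≫ φ.1) (by
        rw [Category.assoc, φ.2, (isPullback_toTensor_classifyGraph P A X).w]))
    (IsPullback.lift_fst _ _ _ _)
  left_inv κ := by
    ext
    rw [← cancel_mono (P Y.left).η]
    simp only [Over.homMk_left, IsPullback.lift_snd]
    exact ((P Y.left).isPullback _ _).w.symm
  right_inv φ := by
    have h := isPullback_toTensor_classifyGraph P A X
    rw [← φ.2] at h
    exact Subtype.ext ((P Y.left).uniq (h.of_right' ((P Y.left).isPullback_map (P b) Y.hom))).symm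

def compatiblePartialMapEquivHomExp (A X Y : Over b) :
    CompatiblePartialMap P A X Y ≃ (X ⟶ exp P A Y) where
  toFun φ := Over.homMk (pullback.lift (curry φ.1) X.hom (by
      rw [← curry_natural_right, φ.2, curry_natural_left])) (pullback.lift_snd _ _ _)
  invFun μ := ⟨uncurry (μ.left ≫ pullback.fst _ _), by
    rw [← uncurry_natural_right, Category.assoc, pullback.condition, ← Category.assoc,
      show μ.left ≫ pullback.snd _ _ = X.hom from Over.w μ, uncurry_natural_left, uncurry_curry]⟩
  left_inv φ := by
    ext
    simp only [Over.homMk_left, pullback.lift_fst, uncurry_curry]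
  right_inv μ := by
    ext
    apply pullback.hom_ext
    · simp only [Over.homMk_left, pullback.lift_fst, curry_uncurry]
    · simp only [Over.homMk_left, pullback.lift_snd]
      exact (Over.w μ).symm

def expHomEquiv (A X Y : Over b) : (A ⊗ X ⟶ Y) ≃ (X ⟶ exp P A Y) :=
  (homEquivCompatiblePartialMap P A X Y).trans (compatiblePartialMapEquivHomExp P A X Y)

lemma expHomEquiv_naturality (A : Over b) {X' X Y : Over b} (ρ : X' ⟶ X) (κ : A ⊗ X ⟶ Y) :
    expHomEquiv P A X' Y ((A ◁ ρ) ≫ κ) = ρ ≫ expHomEquiv P A X Y κ := by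
  ext
  apply pullback.hom_ext
  · simp only [expHomEquiv, homEquivCompatiblePartialMap, compatiblePartialMapEquivHomExp,
      Equiv.trans_apply, Equiv.coe_fn_mk, Over.homMk_left, Over.comp_left, Category.assoc,
      pullback.lift_fst, ← curry_natural_left,
      PartialMapClassifier.comp_classify _ (isPullback_whiskerLeft_left_toTensor A ρ)]
  · simp only [expHomEquiv, homEquivCompatiblePartialMap, compatiblePartialMapEquivHomExp,
      Equiv.trans_apply, Equiv.coe_fn_mk, Over.homMk_left, Over.comp_left, Category.assoc,
      pullback.lift_snd, Over.w ρ]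

variable (b) in
abbrev monoidalClosed : MonoidalClosed (Over b) where
  closed A := {
    rightAdj := Adjunction.rightAdjointOfEquiv (expHomEquiv P A) fun _ _ _ ρ κ =>
      expHomEquiv_naturality P A ρ κ
    adj := Adjunction.adjunctionOfEquivRight _ _ }

end Exponentials

section Classifier

variable [CartesianMonoidalCategory E] (𝒞 : Subobject.Classifier E) {b : E}

lemma isPullback_homMk_lift_truth_iff {A B : Over b} (m : A ⟶ B) (u : A ⟶ Over.mk (𝟙 b))
    (χ : B ⟶ Over.mk (snd 𝒞.Ω b)) :
    IsPullback m u χ (Over.homMk (lift (𝒞.χ₀ b ≫ 𝒞.truth) (𝟙 b))) ↔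
      IsPullback m.left (𝒞.χ₀ A.left) (χ.left ≫ fst _ _) 𝒞.truth := by
  have hu : u.left = m.left ≫ B.hom := by
    rw [Over.w m]
    simpa using Over.w u
  have hχ : χ.left = lift (χ.left ≫ fst _ _) B.hom := by
    apply CartesianMonoidalCategory.hom_ext
    · simp
    · simpa using Over.w χ
  rw [← Subobject.Classifier.isPullback_lift_lift_truth_iff _ _ B.hom, ← hχ, ← hu]
  exact ⟨fun h => h.map (Over.forget b),
    fun h' => IsPullback.of_map_of_faithful (Over.forget b) (f := m) (g := u) (h := χ) h'⟩

variable (b) in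
def classifier : Subobject.Classifier (Over b) :=
  .mkOfTerminalΩ₀ (Over.mk (𝟙 b)) Over.mkIdTerminal (Over.mk (snd 𝒞.Ω b))
    (Over.homMk (lift (𝒞.χ₀ b ≫ 𝒞.truth) (𝟙 b)))
    (fun {_ B} m _ => Over.homMk (lift (𝒞.χ m.left) B.hom))
    (fun m _ => (isPullback_homMk_lift_truth_iff 𝒞 m _ _).2 (by
      simpa only [Over.homMk_left, lift_fst] using 𝒞.isPullback m.left))
    (fun {_ B} m _ χ h => by
      ext
      apply CartesianMonoidalCategory.hom_ext
      · exact (𝒞.uniq _ ((isPullback_homMk_lift_truth_iff 𝒞 m _ _).1 h)).trans (lift_fst _ _).symm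
      · exact (Over.w χ).trans (lift_snd _ _).symm)

end Classifier

end Over

end CategoryTheory

end

theorem stmt_19_general {E : Type*} [Category E] [HasFiniteLimits E] [CartesianMonoidalCategory E]
    [MonoidalClosed E]
    (Ω : E) (t : 𝟙_ E ⟶ Ω)
    (classify : ∀ {x y : E} (m : x ⟶ y), Mono m →
      ∃! χ : y ⟶ Ω, IsPullback (toUnit x) m t χ)
    (b : E) (δ : b ⊗ b ⟶ Ω)
    (hδ : IsPullback (toUnit b) (lift (𝟙 b) (𝟙 b)) t δ) :
    (∃ _ : CartesianMonoidalCategory (Over b), Nonempty (MonoidalClosed (Over b))) ∧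
    Nonempty (IsTerminal (Over.mk (𝟙 b))) ∧
    (∀ {A B : Over b} (m : A ⟶ B), Mono m →
      ∃! χ : B ⟶ Over.mk (snd Ω b),
        IsPullback (Over.homMk A.hom : A ⟶ Over.mk (𝟙 b)) m
          (Over.homMk (lift (lift (𝟙 b) (𝟙 b) ≫ δ) (𝟙 b)) :
            Over.mk (𝟙 b) ⟶ Over.mk (snd Ω b)) χ) := by
  let 𝒞 := Subobject.Classifier.mkOfTensorUnit t classify
  let 𝒞b := Over.classifier 𝒞 b
  refine ⟨⟨Over.cartesianMonoidalCategory b, ⟨Over.monoidalClosed b 𝒞.partialMapClassifier⟩⟩,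
    ⟨Over.mkIdTerminal⟩, fun {A B} m _ => ?_⟩
  have hpoint : (Over.homMk (lift (lift (𝟙 b) (𝟙 b) ≫ δ) (𝟙 b)) :
      Over.mk (𝟙 b) ⟶ Over.mk (snd Ω b)) = 𝒞b.truth :=
    Over.OverMorphism.ext (congrArg (lift · (𝟙 b)) hδ.w.symm)
  rw [hpoint, Over.mkIdTerminal.hom_ext (Over.homMk A.hom) (𝒞b.χ₀ A)]
  exact ⟨𝒞b.χ m, (𝒞b.isPullback m).flip, fun χ h => 𝒞b.uniq m h.flip⟩

/-- For any object `b` of an elementary topos `E`, the slice `E/b` is cartesian closed;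
moreover it is an elementary topos, with terminal object `𝟙 b` and subobject classifier
the projection `Ω ⊗ b ⟶ b` with classifying point `⟨δ_b ∘ Δ_b, 𝟙 b⟩`. -/
theorem stmt_19 {E : Type*} [Category E] [HasFiniteLimits E] [CartesianMonoidalCategory E]
    [MonoidalClosed E] [HasFiniteColimits E]
    (Ω : E) (t : 𝟙_ E ⟶ Ω)
    (classify : ∀ {x y : E} (m : x ⟶ y), Mono m →
      ∃! χ : y ⟶ Ω, IsPullback (toUnit x) m t χ)
    (b : E) (δ : b ⊗ b ⟶ Ω)
    (hδ : IsPullback (toUnit b) (lift (𝟙 b) (𝟙 b)) t δ) :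
    (∃ _ : CartesianMonoidalCategory (Over b), Nonempty (MonoidalClosed (Over b))) ∧
    Nonempty (IsTerminal (Over.mk (𝟙 b))) ∧
    (∀ {A B : Over b} (m : A ⟶ B), Mono m →
      ∃! χ : B ⟶ Over.mk (snd Ω b),
        IsPullback (Over.homMk A.hom : A ⟶ Over.mk (𝟙 b)) m
          (Over.homMk (lift (lift (𝟙 b) (𝟙 b) ≫ δ) (𝟙 b)) :
            Over.mk (𝟙 b) ⟶ Over.mk (snd Ω b)) χ) :=
  stmt_19_general Ω t classify b δ hδ
end
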